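/- Let F be a smooth vector field on ℝⁿ with flow Φᵗ, let g(x) = e^{σ(x)} Iₙ be a conformal Euclidean metric, and suppose L_F g ⪰ 0 everywhere. Then for any solution δ(t) of the linearized (variational) equation δ'(t) = J_F(Φᵗ(x)) δ(t) along a trajectory z(t) = Φᵗ(x), the conformal norm t ↦ e^{σ(z(t))} ‖δ(t)‖² is nondecreasing in t. -/

import Mathlib

noncomputable section

/-- Let `F` be a smooth vector field on ℝⁿ, `g(x) = e^{σ(x)} Iₙ` a conformal Euclidean
metric with `L_F g ⪰ 0` everywhere (i.e. the symmetric matrix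
`⟨∇σ(x), F(x)⟩ Iₙ + J_F(x) + J_F(x)ᵀ` is positive semidefinite for each `x`, equivalently
`⟨∇σ(x), F(x)⟩‖v‖² + 2⟨J_F(x) v, v⟩ ≥ 0` for all `v`).
Then along any trajectory `z` of `F` and any solution `δ` of the linearized equation
`δ' = J_F(z(t)) δ`, the conformal norm `t ↦ e^{σ(z(t))} ‖δ(t)‖²` is nondecreasing. -/
theorem conformal_norm_nondecreasing_of_lieDeriv_psd {n : ℕ}
    (F : EuclideanSpace ℝ (Fin n) → EuclideanSpace ℝ (Fin n)) (hF : ContDiff ℝ (⊤ : ℕ∞) F)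
    (σ : EuclideanSpace ℝ (Fin n) → ℝ) (hσ : ContDiff ℝ (⊤ : ℕ∞) σ)
    (hpsd : ∀ (x v : EuclideanSpace ℝ (Fin n)),
      0 ≤ (inner ℝ (gradient σ x) (F x) : ℝ) * ‖v‖ ^ 2
            + 2 * (inner ℝ (fderiv ℝ F x v) v : ℝ))
    (z δ : ℝ → EuclideanSpace ℝ (Fin n))
    (hz : ∀ t, HasDerivAt z (F (z t)) t)
    (hδ : ∀ t, HasDerivAt δ (fderiv ℝ F (z t) (δ t)) t) :
    Monotone fun t => Real.exp (σ (z t)) * ‖δ t‖ ^ 2 := by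
  have key : ∀ t, HasDerivAt (fun t => Real.exp (σ (z t)) * ‖δ t‖ ^ 2)
      (Real.exp (σ (z t)) * ((inner ℝ (gradient σ (z t)) (F (z t)) : ℝ) * ‖δ t‖ ^ 2
        + 2 * (inner ℝ (fderiv ℝ F (z t) (δ t)) (δ t) : ℝ))) t := by
    intro t
    have hσz : HasDerivAt (fun t => σ (z t)) ((inner ℝ (gradient σ (z t)) (F (z t)) : ℝ)) t := by
      have hg : HasGradientAt σ (gradient σ (z t)) (z t) :=
        (hσ.differentiable (by simp) (z t)).hasGradientAt
      have := hg.hasFDerivAt.comp_hasDerivAt t (hz t)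
      exact this.congr_deriv (by simp)
    have hexp : HasDerivAt (fun t => Real.exp (σ (z t)))
        (Real.exp (σ (z t)) * (inner ℝ (gradient σ (z t)) (F (z t)) : ℝ)) t := hσz.exp
    have hnorm : HasDerivAt (fun t => ‖δ t‖ ^ 2)
        (2 * (inner ℝ (fderiv ℝ F (z t) (δ t)) (δ t) : ℝ)) t := by
      have h1 : HasDerivAt (fun t => (inner ℝ (δ t) (δ t) : ℝ))
          ((inner ℝ (δ t) (fderiv ℝ F (z t) (δ t)) : ℝ)
            + (inner ℝ (fderiv ℝ F (z t) (δ t)) (δ t) : ℝ)) t := (hδ t).inner ℝ (hδ t)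
      have : ∀ s, ‖δ s‖ ^ 2 = (inner ℝ (δ s) (δ s) : ℝ) := fun s =>
        (real_inner_self_eq_norm_sq (δ s)).symm
      simp only [this]
      convert h1 using 1
      rw [real_inner_comm (δ t)]; ring
    have := hexp.mul hnorm
    exact this.congr_deriv (by ring)
  apply monotone_of_deriv_nonneg
  · exact fun t => (key t).differentiableAt
  · intro t
    rw [(key t).deriv]
    exact mul_nonneg (Real.exp_nonneg _) (hpsd (z t) (δ t))
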